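/- (Almost-sure equals sure winning for energy objectives in MDPs) Let M = (Q, E, δ) be an MDP with weight function w : Q × Q → ℤ, q₀ ∈ Q a state, σ a strategy, and c₀ ∈ ℕ an initial credit. Then P_{q₀}^σ(PosEnergy(c₀)) = 1 if and only if every play from q₀ consistent with σ belongs to PosEnergy(c₀), where a play ρ = q₀q₁q₂… is consistent with σ if for every i: if q_i ∈ Q₁ then σ(q₀…q_i)(q_{i+1}) > 0, and if q_i ∈ Q_P then δ(q_i)(q_{i+1}) > 0. -/
import Mathlib


open MeasureTheory Filter
open scoped Classical ENNReal

namespace MPP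

/-- A Markov decision process: states `Q`, player-1 states `Q1` (the rest are
probabilistic), edge relation `E` with every state having a successor, and a
probabilistic transition function `δ` whose support at every probabilistic state
is exactly the set of successors. -/
structure MDP (Q : Type) where
  Q1 : Set Q
  E : Q → Q → Prop
  E_nonempty : ∀ q, ∃ q', E q q'
  δ : Q → PMF Q
  δ_support : ∀ q, q ∉ Q1 → ∀ q', q' ∈ (δ q).support ↔ E q q'

/-- A strategy: given the history `h` (the states strictly before the current one)
and the current state `q`, if `q` is a player-1 state it selects a distribution on
successors of `q`. -/
structure Strategy {Q : Type} (M : MDP Q) where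
  act : List Q → Q → PMF Q
  act_support : ∀ h q, q ∈ M.Q1 → ∀ q', q' ∈ (act h q).support → M.E q q'

variable {Q : Type}

/-- One step of the history-dependent transition kernel. -/
noncomputable def MDP.step (M : MDP Q) (σ : Strategy M) (h : List Q) (q : Q) : PMF Q :=
  if q ∈ M.Q1 then σ.act h q else M.δ q

/-- Probability of traversing the finite sequence `future` starting at `q` with
past history `h`. -/
noncomputable def pathProb (M : MDP Q) (σ : Strategy M) : List Q → Q → List Q → ℝ≥0∞
  | _, _, [] => 1
  | h, q, q' :: rest => M.step σ h q q' * pathProb M σ (h ++ [q]) q' rest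

/-- `μ` is the trajectory measure (Ionescu–Tulcea) on plays of `M` under strategy
`σ`, starting at `q`: it is the (unique) probability measure on `ℕ → Q` (product
σ-algebra) giving every cylinder its product probability. -/
def IsTrajMeasure [MeasurableSpace Q] (M : MDP Q) (σ : Strategy M) (q : Q)
    (μ : Measure (ℕ → Q)) : Prop :=
  IsProbabilityMeasure μ ∧
    ∀ (n : ℕ) (f : ℕ → Q),
      μ {ρ | ∀ i ≤ n, ρ i = f i} =
        if f 0 = q then pathProb M σ [] q ((List.range n).map fun i => f (i + 1)) else 0

/-- The set of states occurring infinitely often in a play. -/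
def infSet (ρ : ℕ → Q) : Set Q := {s | ∀ N, ∃ n, N ≤ n ∧ ρ n = s}

/-- End-component: nonempty, closed under probabilistic transitions, every state has
a successor inside, and strongly connected inside. -/
def MDP.IsEndComponent (M : MDP Q) (U : Set Q) : Prop :=
  U.Nonempty ∧
    (∀ q ∈ U, q ∉ M.Q1 → (M.δ q).support ⊆ U) ∧
    (∀ q ∈ U, ∃ q' ∈ U, M.E q q') ∧
    ∀ q ∈ U, ∀ q' ∈ U, Relation.ReflTransGen (fun a b => a ∈ U ∧ b ∈ U ∧ M.E a b) q q'

/-- Energy level of the length-`n` prefix of a play. -/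
def EL (w : Q → Q → ℤ) (ρ : ℕ → Q) (n : ℕ) : ℤ :=
  ∑ i ∈ Finset.range n, w (ρ i) (ρ (i + 1))

/-- Mean payoff (liminf of averages) of a play. -/
noncomputable def MP (w : Q → Q → ℤ) (ρ : ℕ → Q) : ℝ :=
  liminf (fun n => (EL w ρ n : ℝ) / n) atTop

/-- Parity objective: the minimal priority visited infinitely often is even. -/
def ParitySet (p : Q → ℕ) : Set (ℕ → Q) := {ρ | Even (sInf (p '' infSet ρ))}

def MeanPayoffGe (w : Q → Q → ℤ) (ν : ℝ) : Set (ℕ → Q) := {ρ | ν ≤ MP w ρ}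

def MeanPayoffGt (w : Q → Q → ℤ) (ν : ℝ) : Set (ℕ → Q) := {ρ | ν < MP w ρ}

/-- Energy objective with initial credit `c₀`. -/
def PosEnergy (w : Q → Q → ℤ) (c₀ : ℕ) : Set (ℕ → Q) :=
  {ρ | ∀ n, 0 ≤ (c₀ : ℤ) + EL w ρ n}

/-- Büchi objective: some state of `B` is visited infinitely often. -/
def Buchi (B : Set Q) : Set (ℕ → Q) := {ρ | (infSet ρ ∩ B).Nonempty}

/-- Expected mean-payoff value: supremum over strategies of the expectation of the
mean payoff under the trajectory measure. -/
noncomputable def ValMP [MeasurableSpace Q] (M : MDP Q) (w : Q → Q → ℤ) (q : Q) : ℝ :=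
  sSup {x | ∃ σ : Strategy M, ∃ μ : Measure (ℕ → Q),
    IsTrajMeasure M σ q μ ∧ x = ∫ ρ, MP w ρ ∂μ}


/-- A play is consistent with strategy `σ` from `q₀` if it starts at `q₀` and every
step is chosen with positive probability by `σ` (at player-1 states) or by `δ`
(at probabilistic states). -/
def ConsistentPlay (M : MDP Q) (σ : Strategy M) (q₀ : Q) (ρ : ℕ → Q) : Prop :=
  ρ 0 = q₀ ∧ ∀ i : ℕ,
    (ρ i ∈ M.Q1 → (σ.act ((List.range i).map ρ) (ρ i)) (ρ (i + 1)) ≠ 0) ∧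
    (ρ i ∉ M.Q1 → (M.δ (ρ i)) (ρ (i + 1)) ≠ 0)

/-- A chosen successor with positive step probability. -/
noncomputable def nextChoice (M : MDP Q) (σ : Strategy M) (h : List Q) (q : Q) : Q :=
  (M.step σ h q).support_nonempty.choose

lemma nextChoice_mem (M : MDP Q) (σ : Strategy M) (h : List Q) (q : Q) :
    M.step σ h q (nextChoice M σ h q) ≠ 0 :=
  (M.step σ h q).support_nonempty.choose_spec

/-- A consistent continuation from history `h` and current state `q`. -/
noncomputable def contFun (M : MDP Q) (σ : Strategy M) : List Q → Q → ℕ → Q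
  | _, q, 0 => q
  | h, q, n + 1 => contFun M σ (h ++ [q]) (nextChoice M σ h q) n

lemma contFun_step (M : MDP Q) (σ : Strategy M) :
    ∀ (n : ℕ) (h : List Q) (q : Q),
      M.step σ (h ++ (List.range n).map (contFun M σ h q)) (contFun M σ h q n)
        (contFun M σ h q (n + 1)) ≠ 0 := by
  intro n
  induction n with
  | zero =>
    intro h q
    simpa [contFun] using nextChoice_mem M σ h q
  | succ n ih =>
    intro h q
    have hhist : h ++ (List.range (n + 1)).map (contFun M σ h q) =
        (h ++ [q]) ++ (List.range n).map (contFun M σ (h ++ [q]) (nextChoice M σ h q)) := by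
      rw [List.range_succ_eq_map]
      simp [contFun, List.map_map, Function.comp]
    rw [hhist]
    show M.step σ _ (contFun M σ (h ++ [q]) (nextChoice M σ h q) n)
        (contFun M σ (h ++ [q]) (nextChoice M σ h q) (n + 1)) ≠ 0
    exact ih (h ++ [q]) (nextChoice M σ h q)

/-- From a finite path of positive probability, build an infinite play all of whose
steps have positive probability. -/
lemma exists_ext (M : MDP Q) (σ : Strategy M) :
    ∀ (l h : List Q) (q : Q), pathProb M σ h q l ≠ 0 →
      ∃ ρ : ℕ → Q, ρ 0 = q ∧ (∀ i (hi : i < l.length), ρ (i + 1) = l.get ⟨i, hi⟩) ∧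
        ∀ i, M.step σ (h ++ (List.range i).map ρ) (ρ i) (ρ (i + 1)) ≠ 0 := by
  intro l
  induction l with
  | nil =>
    intro h q _
    exact ⟨contFun M σ h q, rfl, by intro i hi; simp at hi, fun i => contFun_step M σ i h q⟩
  | cons a l ih =>
    intro h q hp
    rw [pathProb] at hp
    have h1 : M.step σ h q a ≠ 0 := fun h0 => hp (by rw [h0, zero_mul])
    have h2 : pathProb M σ (h ++ [q]) a l ≠ 0 := fun h0 => hp (by rw [h0, mul_zero])
    obtain ⟨ρ', hρ'0, hρ'get, hρ'step⟩ := ih (h ++ [q]) a h2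
    refine ⟨fun n => match n with | 0 => q | n + 1 => ρ' n, rfl, ?_, ?_⟩
    · intro i hi
      match i with
      | 0 => exact hρ'0
      | i + 1 => exact hρ'get i (by simpa using hi)
    · intro i
      match i with
      | 0 => simpa [hρ'0] using h1
      | i + 1 =>
        have hhist : h ++ (List.range (i + 1)).map
              (fun n => match n with | 0 => q | n + 1 => ρ' n) =
            (h ++ [q]) ++ (List.range i).map ρ' := by
          rw [List.range_succ_eq_map]
          simp [List.map_map, Function.comp]
        rw [hhist]
        exact hρ'step i

/-- The path probability along a play's prefix as a product of step probabilities. -/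
lemma pathProb_eq_prod (M : MDP Q) (σ : Strategy M) :
    ∀ (n : ℕ) (h : List Q) (ρ : ℕ → Q),
      pathProb M σ h (ρ 0) ((List.range n).map fun i => ρ (i + 1)) =
        ∏ i ∈ Finset.range n, M.step σ (h ++ (List.range i).map ρ) (ρ i) (ρ (i + 1)) := by
  intro n
  induction n with
  | zero => intro h ρ; simp [pathProb]
  | succ n ih =>
    intro h ρ
    rw [List.range_succ_eq_map]
    simp only [List.map_cons, List.map_map]
    rw [pathProb]
    have := ih (h ++ [ρ 0]) (fun i => ρ (i + 1))
    simp only [Function.comp_def, Nat.succ_eq_add_one] at this ⊢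
    rw [this, Finset.prod_range_succ']
    have hh : ∀ i, (h ++ [ρ 0]) ++ (List.range i).map (fun i => ρ (i + 1)) =
        h ++ (List.range (i + 1)).map ρ := by
      intro i
      rw [List.range_succ_eq_map]
      simp [List.map_map, Function.comp]
    rw [mul_comm]
    congr 1
    · exact Finset.prod_congr rfl fun i _ => by rw [hh i]
    · simp

lemma EL_congr (w : Q → Q → ℤ) {ρ ρ' : ℕ → Q} {n : ℕ} (h : ∀ i ≤ n, ρ i = ρ' i) :
    EL w ρ n = EL w ρ' n := by
  unfold EL
  refine Finset.sum_congr rfl fun i hi => ?_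
  have hi' := Finset.mem_range.mp hi
  rw [h i (by omega), h (i + 1) (by omega)]

lemma cyl_measurable [MeasurableSpace Q] [MeasurableSingletonClass Q]
    (n : ℕ) (f : ℕ → Q) : MeasurableSet {ρ : ℕ → Q | ∀ i ≤ n, ρ i = f i} := by
  have : {ρ : ℕ → Q | ∀ i ≤ n, ρ i = f i} =
      ⋂ i ∈ Set.Iic n, (fun ρ : ℕ → Q => ρ i) ⁻¹' {f i} := by
    ext ρ; simp [Set.mem_iInter]
  rw [this]
  exact MeasurableSet.biInter (Set.to_countable _) fun i _ =>
    measurable_pi_apply i (measurableSet_singleton (f i))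

/-- Almost-sure winning equals sure winning for energy objectives in MDPs: the energy
objective holds with probability 1 iff every play consistent with the strategy
satisfies it. -/
theorem energy_almost_sure_iff_sure [Fintype Q] [Nonempty Q]
    [MeasurableSpace Q] [MeasurableSingletonClass Q]
    (M : MDP Q) (w : Q → Q → ℤ) (q₀ : Q) (σ : Strategy M) (c₀ : ℕ)
    (μ : Measure (ℕ → Q)) (hμ : IsTrajMeasure M σ q₀ μ) :
    μ (PosEnergy w c₀) = 1 ↔
      ∀ ρ : ℕ → Q, ConsistentPlay M σ q₀ ρ → ρ ∈ PosEnergy w c₀ := by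
  haveI : IsProbabilityMeasure μ := hμ.1
  constructor
  · -- almost sure → sure
    intro h1 ρ ⟨hρ0, hρ⟩
    by_contra hbad
    simp only [PosEnergy, Set.mem_setOf_eq, not_forall, not_le] at hbad
    obtain ⟨n, hn⟩ := hbad
    set C : Set (ℕ → Q) := {ρ' | ∀ i ≤ n, ρ' i = ρ i} with hC
    have hμC : μ C = pathProb M σ [] q₀ ((List.range n).map fun i => ρ (i + 1)) := by
      rw [hμ.2 n ρ, if_pos hρ0]
    have hCpos : μ C ≠ 0 := by
      rw [hμC]
      have : pathProb M σ [] (ρ 0) ((List.range n).map fun i => ρ (i + 1)) =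
          ∏ i ∈ Finset.range n, M.step σ ([] ++ (List.range i).map ρ) (ρ i) (ρ (i + 1)) :=
        pathProb_eq_prod M σ n [] ρ
      rw [hρ0] at this
      rw [this]
      refine Finset.prod_ne_zero_iff.mpr fun i _ => ?_
      simp only [List.nil_append, MDP.step]
      by_cases hq : ρ i ∈ M.Q1
      · rw [if_pos hq]; exact (hρ i).1 hq
      · rw [if_neg hq]; exact (hρ i).2 hq
    have hsub : C ⊆ (PosEnergy w c₀)ᶜ := by
      intro ρ' hρ' hmem
      have := hmem n
      rw [EL_congr w hρ'] at this
      omega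
    have hle : μ (PosEnergy w c₀) ≤ 1 - μ C := by
      calc μ (PosEnergy w c₀) ≤ μ Cᶜ := measure_mono fun x hx hxc => hsub hxc hx
        _ = 1 - μ C := by
            rw [measure_compl (cyl_measurable n ρ) (measure_ne_top μ C), measure_univ]
    have hlt : (1 : ℝ≥0∞) - μ C < 1 :=
      ENNReal.sub_lt_self ENNReal.one_ne_top one_ne_zero hCpos
    rw [h1] at hle
    exact absurd (lt_of_le_of_lt hle hlt) (lt_irrefl _)
  · -- sure → almost sure
    intro hall
    have hcompl : μ (PosEnergy w c₀)ᶜ = 0 := by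
      have hcovers : (PosEnergy w c₀)ᶜ ⊆
          ⋃ n : ℕ, {ρ : ℕ → Q | (c₀ : ℤ) + EL w ρ n < 0} := by
        intro ρ hρ
        simp only [PosEnergy, Set.mem_compl_iff, Set.mem_setOf_eq, not_forall, not_le] at hρ
        obtain ⟨n, hn⟩ := hρ
        exact Set.mem_iUnion.mpr ⟨n, hn⟩
      refine measure_mono_null hcovers (measure_iUnion_null fun n => ?_)
      -- cover the bad set at stage n by cylinders
      have hcov2 : {ρ : ℕ → Q | (c₀ : ℤ) + EL w ρ n < 0} ⊆
          ⋃ g : Fin (n + 1) → Q,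
            {ρ : ℕ → Q | ((c₀ : ℤ) + EL w (fun i => g ⟨min i n, by omega⟩) n < 0) ∧
              ∀ i ≤ n, ρ i = g ⟨min i n, by omega⟩} := by
        intro ρ hρ
        refine Set.mem_iUnion.mpr ⟨fun i => ρ i, ?_, ?_⟩
        · have : EL w (fun i => ρ (⟨min i n, by omega⟩ : Fin (n + 1))) n = EL w ρ n := by
            refine EL_congr w fun i hi => ?_
            simp [Nat.min_eq_left hi]
          rw [this]; exact hρ
        · intro i hi
          simp [Nat.min_eq_left hi]
      refine measure_mono_null hcov2 (measure_iUnion_null fun g => ?_)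
      set f : ℕ → Q := fun i => g ⟨min i n, by omega⟩ with hf
      by_cases hbad : (c₀ : ℤ) + EL w f n < 0
      · have hsub : {ρ : ℕ → Q | ((c₀ : ℤ) + EL w f n < 0) ∧ ∀ i ≤ n, ρ i = f i} ⊆
            {ρ : ℕ → Q | ∀ i ≤ n, ρ i = f i} := fun ρ hρ => hρ.2
        refine measure_mono_null hsub ?_
        rw [hμ.2 n f]
        by_cases hf0 : f 0 = q₀
        · rw [if_pos hf0]
          by_contra hne
          obtain ⟨ρ, hρ0, hρget, hρstep⟩ :=
            exists_ext M σ ((List.range n).map fun i => f (i + 1)) [] q₀ hne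
          have hcons : ConsistentPlay M σ q₀ ρ := by
            refine ⟨hρ0, fun i => ?_⟩
            have := hρstep i
            simp only [List.nil_append, MDP.step] at this
            constructor
            · intro hq; rw [if_pos hq] at this; exact this
            · intro hq; rw [if_neg hq] at this; exact this
          have hmem := hall ρ hcons n
          have hagree : ∀ i ≤ n, ρ i = f i := by
            intro i hi
            match i with
            | 0 => rw [hρ0, hf0]
            | i + 1 =>
              have hi' : i < ((List.range n).map fun i => f (i + 1)).length := by
                simpa using (by omega : i < n)
              rw [hρget i hi']
              simp
          rw [EL_congr w hagree] at hmem
          omega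
        · rw [if_neg hf0]
      · have : {ρ : ℕ → Q | ((c₀ : ℤ) + EL w f n < 0) ∧ ∀ i ≤ n, ρ i = f i} = ∅ := by
          ext ρ; simp only [Set.mem_setOf_eq, Set.mem_empty_iff_false, iff_false]
          exact fun h => hbad h.1
        rw [this]; exact measure_empty
    have h1 : (1 : ℝ≥0∞) ≤ μ (PosEnergy w c₀) := by
      have := measure_union_le (μ := μ) (PosEnergy w c₀) (PosEnergy w c₀)ᶜ
      rw [Set.union_compl_self, measure_univ, hcompl, add_zero] at this
      exact this
    exact le_antisymm prob_le_one h1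

end MPP
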